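/- For G > 1, the function N_S ↦ g(G·N_S + G − 1) − g((G−1)(N_S + 1)) is monotone nondecreasing on [0, ∞), where g(x) = (x+1)log₂(x+1) − x·log₂(x) with g(0)=0. -/

import Mathlib

/-!
The thermal entropy `g` has `g' x = log₂ (1 + 1/x)`, and `1/(x+1) ≤ log (1 + 1/x) ≤ 1/x`.
Bounding the gain term from below and the loss term from above, the derivative of the map is at
least `log₂ e · (G / (G(N+1)) - (G-1) / ((G-1)(N+1))) = 0`: the arguments `GN + G - 1` and
`(G-1)(N+1)` are such that both bounds meet at `1/(N+1)`.
-/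

open Real Set

namespace Real

lemma inv_add_one_le_log_add_one_sub_log {x : ℝ} (hx : 0 < x) :
    (x + 1)⁻¹ ≤ log (x + 1) - log x := by
  have h := one_sub_inv_le_log_of_pos (div_pos (by linarith : 0 < x + 1) hx)
  rw [log_div (by linarith) hx.ne', inv_div] at h
  have : 1 - x / (x + 1) = (x + 1)⁻¹ := by field_simp; ring
  linarith

lemma log_add_one_sub_log_le_inv {x : ℝ} (hx : 0 < x) :
    log (x + 1) - log x ≤ x⁻¹ := by
  have h := log_le_sub_one_of_pos (div_pos (by linarith : 0 < x + 1) hx)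
  rw [log_div (by linarith) hx.ne'] at h
  have : (x + 1) / x - 1 = x⁻¹ := by field_simp; ring
  linarith

end Real

noncomputable def thermalEntropy (x : ℝ) : ℝ :=
  (x + 1) * logb 2 (x + 1) - x * logb 2 x

lemma hasDerivAt_thermalEntropy {x : ℝ} (hx : x ≠ 0) (hx1 : x + 1 ≠ 0) :
    HasDerivAt thermalEntropy ((log (x + 1) - log x) / log 2) x := by
  have hunfold : thermalEntropy = fun y => ((y + 1) * log (y + 1) - y * log y) / log 2 := by
    ext y
    simp only [thermalEntropy, logb]
    ring
  rw [hunfold]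
  exact ((((hasDerivAt_mul_log hx1).comp_add_const x 1).sub
    (hasDerivAt_mul_log hx)).div_const (log 2)).congr_deriv (by ring)

noncomputable def amplifierCapacity (G N : ℝ) : ℝ :=
  thermalEntropy (G * N + G - 1) - thermalEntropy ((G - 1) * (N + 1))

lemma hasDerivAt_amplifierCapacity {G N : ℝ} (hG : 1 < G) (hN : 0 ≤ N) :
    HasDerivAt (amplifierCapacity G)
      ((G * (log (G * N + G - 1 + 1) - log (G * N + G - 1))
        - (G - 1) * (log ((G - 1) * (N + 1) + 1) - log ((G - 1) * (N + 1)))) / log 2) N := by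
  have ha : 0 < G * N + G - 1 := by nlinarith
  have hb : 0 < (G - 1) * (N + 1) := by nlinarith
  have hgain := (hasDerivAt_thermalEntropy ha.ne' (by linarith)).comp N
    ((((hasDerivAt_id N).const_mul G).add_const G).sub_const 1)
  have hloss := (hasDerivAt_thermalEntropy hb.ne' (by linarith)).comp N
    (((hasDerivAt_id N).add_const 1).const_mul (G - 1))
  exact (hgain.sub hloss).congr_deriv (by ring)

lemma amplifierCapacity_deriv_nonneg {G N : ℝ} (hG : 1 < G) (hN : 0 ≤ N) :
    0 ≤ (G * (log (G * N + G - 1 + 1) - log (G * N + G - 1))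
      - (G - 1) * (log ((G - 1) * (N + 1) + 1) - log ((G - 1) * (N + 1)))) / log 2 := by
  have ha : 0 < G * N + G - 1 := by nlinarith
  have hb : 0 < (G - 1) * (N + 1) := by nlinarith
  refine div_nonneg (sub_nonneg.2 ?_) (log_pos one_lt_two).le
  calc (G - 1) * (log ((G - 1) * (N + 1) + 1) - log ((G - 1) * (N + 1)))
      ≤ (G - 1) * ((G - 1) * (N + 1))⁻¹ :=
        mul_le_mul_of_nonneg_left (log_add_one_sub_log_le_inv hb) (by linarith)
    _ = G * (G * N + G - 1 + 1)⁻¹ := by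
        field_simp [(by linarith : G - 1 ≠ 0), (by linarith : N + 1 ≠ 0)]
        ring
    _ ≤ G * (log (G * N + G - 1 + 1) - log (G * N + G - 1)) :=
        mul_le_mul_of_nonneg_left (inv_add_one_le_log_add_one_sub_log ha) (by linarith)

/-- For G > 1, the map N ↦ g(GN + G − 1) − g((G−1)(N+1)) is monotone
    nondecreasing on [0, ∞), where g(x) = (x+1)·log₂(x+1) − x·log₂ x. -/
theorem amplifier_capacity_monotone (G : ℝ) (hG : 1 < G) :
    MonotoneOn
      (fun N : ℝ =>
        ((G * N + G - 1 + 1) * Real.logb 2 (G * N + G - 1 + 1)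
            - (G * N + G - 1) * Real.logb 2 (G * N + G - 1))
          - (((G - 1) * (N + 1) + 1) * Real.logb 2 ((G - 1) * (N + 1) + 1)
              - (G - 1) * (N + 1) * Real.logb 2 ((G - 1) * (N + 1))))
      (Set.Ici (0 : ℝ)) := by
  change MonotoneOn (amplifierCapacity G) (Ici 0)
  refine monotoneOn_of_hasDerivWithinAt_nonneg (convex_Ici 0)
    (fun N hN => (hasDerivAt_amplifierCapacity hG hN).continuousAt.continuousWithinAt)
    (fun N hN => (hasDerivAt_amplifierCapacity hG (interior_subset hN)).hasDerivWithinAt)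
    (fun N hN => amplifierCapacity_deriv_nonneg hG (interior_subset hN))
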